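/- arXiv:1603.04972 — 6 statements merged into one kernel-verified Lean document; each statement's English description precedes it below -/
import Mathlib

section
/- If the (α,β)-filters of a poset P are separating over P (whenever p ≰ q there is an (α,β)-filter containing p but not q), then the map h(p) = {γ : γ is an (α,β)-filter of P and p ∈ γ} is an (α,β)-representation of P: it is an order embedding into a powerset that maps existing meets of sets of size < α to intersections and existing joins of sets of size < β to unions. -/
open Cardinal

/-- `F` is an `(α,β)`-filter of the poset `P`. -/
def ABFilter {P : Type u} [PartialOrder P] (α β : Cardinal.{u}) (F : Set P) : Prop :=
  (∀ p ∈ F, ∀ q, p ≤ q → q ∈ F) ∧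
  (∀ X : Set P, X.Nonempty → X ⊆ F → #X < α → ∀ m, IsGLB X m → m ∈ F) ∧
  (∀ Y : Set P, Y.Nonempty → #Y < β → ∀ j, IsLUB Y j → j ∈ F → ∃ y ∈ Y, y ∈ F)

/-- If the `(α,β)`-filters of `P` are separating, then
`h(p) = {γ : γ is an (α,β)-filter and p ∈ γ}` is an `(α,β)`-representation of `P`:
an order embedding sending existing meets of sets of size `< α` to intersections and
existing joins of sets of size `< β` to unions. -/
theorem separating_filters_give_representation {P : Type u} [PartialOrder P]
    (α β : Cardinal.{u}) (hα : 2 < α) (hβ : 2 < β)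
    (hsep : ∀ p q : P, ¬ p ≤ q → ∃ F : Set P, ABFilter α β F ∧ p ∈ F ∧ q ∉ F) :
    let h : P → Set {F : Set P // ABFilter α β F} := fun p => {γ | p ∈ γ.1}
    (∀ p q : P, p ≤ q ↔ h p ⊆ h q) ∧
    (∀ S : Set P, S.Nonempty → #S < α → ∀ m, IsGLB S m → h m = ⋂ s ∈ S, h s) ∧
    (∀ S : Set P, S.Nonempty → #S < β → ∀ j, IsLUB S j → h j = ⋃ s ∈ S, h s) := by
  intro h
  refine ⟨?_, ?_, ?_⟩
  · intro p q
    constructor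
    · intro hpq γ hp
      exact γ.2.1 p hp q hpq
    · intro hsub
      by_contra hle
      obtain ⟨F, hF, hpF, hqF⟩ := hsep p q hle
      exact hqF (hsub (show (⟨F, hF⟩ : {F : Set P // ABFilter α β F}) ∈ h p from hpF))
  · intro S hS hcard m hm
    ext γ
    simp only [Set.mem_iInter]
    constructor
    · intro hmγ s hs
      exact γ.2.1 m hmγ s (hm.1 hs)
    · intro hall
      exact γ.2.2.1 S hS (fun s hs => hall s hs) hcard m hm
  · intro S hS hcard j hj
    ext γ
    simp only [Set.mem_iUnion]
    constructor
    · intro hjγ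
      obtain ⟨y, hy, hyγ⟩ := γ.2.2.2 S hS hcard j hj hjγ
      exact ⟨y, hy, hyγ⟩
    · rintro ⟨s, hs, hsγ⟩
      exact γ.2.1 s hsγ j (hj.1 hs)
end

section
/- If a poset P has an (α,β)-representation h : P → ℘(X), then for every x ∈ X the preimage set h⁻¹[x] = {p ∈ P : x ∈ h(p)} is an (α,β)-filter of P, and consequently the (α,β)-filters of P are separating over P: whenever a ≰ b there is an (α,β)-filter containing a but not b. -/
open Cardinal

/-- `h : P → ℘(X)` is an `(α,β)`-representation: an order embedding sending existing
meets of nonempty sets of size `< α` to intersections and existing joins of nonempty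
sets of size `< β` to unions. -/
def IsRep {P : Type u} [PartialOrder P] {X : Type u} (α β : Cardinal.{u})
    (h : P → Set X) : Prop :=
  (∀ p q : P, p ≤ q ↔ h p ⊆ h q) ∧
  (∀ S : Set P, S.Nonempty → #S < α → ∀ m, IsGLB S m → h m = ⋂ s ∈ S, h s) ∧
  (∀ S : Set P, S.Nonempty → #S < β → ∀ j, IsLUB S j → h j = ⋃ s ∈ S, h s)

/-- If `h` is an `(α,β)`-representation of `P` then each preimage
`h⁻¹[x] = {p : x ∈ h p}` is an `(α,β)`-filter, and consequently the `(α,β)`-filters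
of `P` are separating. -/
theorem representation_gives_separating_filters {P : Type u} [PartialOrder P]
    {X : Type u} (α β : Cardinal.{u}) (hα : 2 < α) (hβ : 2 < β)
    (h : P → Set X) (hrep : IsRep α β h) :
    (∀ x : X, ABFilter α β {p : P | x ∈ h p}) ∧
    (∀ a b : P, ¬ a ≤ b → ∃ F : Set P, ABFilter α β F ∧ a ∈ F ∧ b ∉ F) := by
  obtain ⟨hmono, hmeet, hjoin⟩ := hrep
  have hfil : ∀ x : X, ABFilter α β {p : P | x ∈ h p} := by
    intro x
    refine ⟨?_, ?_, ?_⟩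
    · intro p hp q hpq
      exact ((hmono p q).1 hpq) hp
    · intro S hS hSF hcard m hglb
      have := hmeet S hS hcard m hglb
      simp only [Set.mem_setOf_eq, this, Set.mem_iInter]
      intro s hs
      exact hSF hs
    · intro Y hY hcard j hlub hj
      have := hjoin Y hY hcard j hlub
      rw [Set.mem_setOf_eq, this] at hj
      simp only [Set.mem_iUnion] at hj
      obtain ⟨y, hy, hxy⟩ := hj
      exact ⟨y, hy, hxy⟩
  refine ⟨hfil, ?_⟩
  intro a b hab
  have : ¬ h a ⊆ h b := fun hc => hab ((hmono a b).2 hc)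
  obtain ⟨x, hxa, hxb⟩ := Set.not_subset.1 this
  exact ⟨{p : P | x ∈ h p}, hfil x, hxa, hxb⟩
end

section
/- A poset P is (α,β)-representable if and only if the (α,β)-filters of P are separating over P. -/
open Cardinal

/-- A poset `P` is `(α,β)`-representable iff its `(α,β)`-filters are
separating over `P`. -/
theorem representable_iff_filters_separating {P : Type u} [PartialOrder P]
    (α β : Cardinal.{u}) (hα : 2 < α) (hβ : 2 < β) :
    (∃ (X : Type u) (h : P → Set X), IsRep α β h) ↔
    (∀ p q : P, ¬ p ≤ q → ∃ F : Set P, ABFilter α β F ∧ p ∈ F ∧ q ∉ F) := by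
  constructor
  · rintro ⟨X, h, hord, hmeet, hjoin⟩ p q hpq
    have : ¬ h p ⊆ h q := fun hc => hpq ((hord p q).2 hc)
    obtain ⟨x, hxp, hxq⟩ := Set.not_subset.1 this
    refine ⟨{r | x ∈ h r}, ⟨?_, ?_, ?_⟩, hxp, hxq⟩
    · intro a ha b hab
      exact (hord a b).1 hab ha
    · intro S hS hSF hScard m hm
      have := hmeet S hS hScard m hm
      simp only [Set.mem_setOf_eq, this, Set.mem_iInter]
      exact fun s hs => hSF hs
    · intro S hS hScard j hj hjF
      have := hjoin S hS hScard j hj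
      rw [Set.mem_setOf_eq, this] at hjF
      simpa using hjF
  · intro hsep
    refine ⟨Set P, fun p => {F | ABFilter α β F ∧ p ∈ F}, ?_, ?_, ?_⟩
    · intro p q
      constructor
      · rintro hpq F ⟨hF, hpF⟩
        exact ⟨hF, hF.1 p hpF q hpq⟩
      · intro hsub
        by_contra hpq
        obtain ⟨F, hF, hpF, hqF⟩ := hsep p q hpq
        exact hqF (hsub ⟨hF, hpF⟩).2
    · intro S hS hScard m hm
      ext F
      simp only [Set.mem_setOf_eq, Set.mem_iInter]
      constructor
      · rintro ⟨hF, hmF⟩ s hs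
        exact ⟨hF, hF.1 m hmF s (hm.1 hs)⟩
      · intro hall
        obtain ⟨s0, hs0⟩ := id hS
        have hF : ABFilter α β F := (hall s0 hs0).1
        refine ⟨hF, hF.2.1 S hS (fun s hs => (hall s hs).2) hScard m hm⟩
    · intro S hS hScard j hj
      ext F
      simp only [Set.mem_setOf_eq, Set.mem_iUnion]
      constructor
      · rintro ⟨hF, hjF⟩
        obtain ⟨y, hyS, hyF⟩ := hF.2.2 S hS hScard j hj hjF
        exact ⟨y, hyS, hF, hyF⟩
      · rintro ⟨s, hsS, hF, hsF⟩
        exact ⟨hF, hF.1 s hsF j (hj.1 hsS)⟩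
end

section
/- For 2 < α, β ≤ ω, a poset P is (α,β)-representable if and only if there is a distributive lattice L and an (α,β)-embedding e : P → L. -/
/-!
Meets and joins in `℘(X)` are intersections and unions, so a representation is the same thing
as an `(α,β)`-embedding into the distributive lattice `℘(X)`. Conversely, Stone's map
`a ↦ {I prime ideal | a ∉ I}` sends a distributive lattice `L` into a powerset by a lattice
homomorphism which, by the prime ideal theorem, is an order embedding. Since `α, β ≤ ω`, only
finite nonempty meets and joins have to be preserved, and a lattice homomorphism preserves
those, so composing an `(α,β)`-embedding `P → L` with Stone's map gives a representation of `P`.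
-/

open Cardinal

/-- `e : P → L` is an `(α,β)`-embedding: an order embedding such that existing meets of
nonempty sets of size `< α` and existing joins of nonempty sets of size `< β` are
preserved (the image of the meet/join is the meet/join of the images). -/
def IsABEmbedding {P : Type u} [PartialOrder P] {L : Type u} [PartialOrder L]
    (α β : Cardinal.{u}) (e : P → L) : Prop :=
  (∀ p q : P, p ≤ q ↔ e p ≤ e q) ∧
  (∀ S : Set P, S.Nonempty → #S < α → ∀ m, IsGLB S m → IsGLB (e '' S) (e m)) ∧
  (∀ S : Set P, S.Nonempty → #S < β → ∀ j, IsLUB S j → IsLUB (e '' S) (e j))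

open Order

theorem IsGLB.map_infHom {F α β : Type*} [SemilatticeInf α] [SemilatticeInf β] [FunLike F α β]
    [InfHomClass F α β] (f : F) {T : Set α} {c : α} (hc : IsGLB T c) (hT : T.Finite)
    (hne : T.Nonempty) : IsGLB (f '' T) (f c) := by
  lift T to Finset α using hT
  have hne' : T.Nonempty := Finset.coe_nonempty.1 hne
  have hc_eq : c = T.inf' hne' id := hc.unique (T.isGLB_inf' hne')
  refine ⟨?_, fun b hb => ?_⟩
  · rintro _ ⟨t, ht, rfl⟩
    exact OrderHomClass.mono f (hc.1 ht)
  · rw [hc_eq, map_finset_inf']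
    exact Finset.le_inf' _ _ fun t ht => hb (Set.mem_image_of_mem f ht)

theorem IsLUB.map_supHom {F α β : Type*} [SemilatticeSup α] [SemilatticeSup β] [FunLike F α β]
    [SupHomClass F α β] (f : F) {T : Set α} {c : α} (hc : IsLUB T c) (hT : T.Finite)
    (hne : T.Nonempty) : IsLUB (f '' T) (f c) :=
  IsGLB.map_infHom (SupHom.dual (f : SupHom α β)) hc hT hne

theorem isRep_iff_isABEmbedding {P X : Type u} [PartialOrder P] {α β : Cardinal.{u}}
    {h : P → Set X} : IsRep α β h ↔ IsABEmbedding α β h := by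
  simp only [IsRep, IsABEmbedding, isGLB_iff_sInf_eq, isLUB_iff_sSup_eq, Set.sInf_eq_sInter,
    Set.sSup_eq_sUnion, Set.sInter_image, Set.sUnion_image, eq_comm]

theorem IsABEmbedding.latticeHom_comp {P L M : Type u} [PartialOrder P] [Lattice L] [Lattice M]
    {α β : Cardinal.{u}} (hα : α ≤ ℵ₀) (hβ : β ≤ ℵ₀) {e : P → L} (he : IsABEmbedding α β e)
    (f : LatticeHom L M) (hf : ∀ a b, f a ≤ f b ↔ a ≤ b) : IsABEmbedding α β (f ∘ e) := by
  obtain ⟨he_le, he_glb, he_lub⟩ := he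
  refine ⟨fun p q => (he_le p q).trans (hf _ _).symm, ?_, ?_⟩
  · intro S hS hcard m hm
    have hfin : S.Finite := lt_aleph0_iff_set_finite.1 (hcard.trans_le hα)
    rw [Set.image_comp]
    exact (he_glb S hS hcard m hm).map_infHom f (hfin.image e) (hS.image e)
  · intro S hS hcard j hj
    have hfin : S.Finite := lt_aleph0_iff_set_finite.1 (hcard.trans_le hβ)
    rw [Set.image_comp]
    exact (he_lub S hS hcard j hj).map_supHom f (hfin.image e) (hS.image e)

namespace DistribLattice

variable (L : Type*) [DistribLattice L]

def stoneHom : LatticeHom L (Set {I : Ideal L // I.IsPrime}) where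
  toFun a := {I | a ∉ I.1}
  map_sup' a b := Set.ext fun I => show a ⊔ b ∉ I.1 ↔ a ∉ I.1 ∨ b ∉ I.1 by
    rw [Ideal.sup_mem_iff, not_and_or]
  map_inf' a b := Set.ext fun I => show a ⊓ b ∉ I.1 ↔ a ∉ I.1 ∧ b ∉ I.1 by
    rw [← not_or]
    exact not_congr ⟨I.2.mem_or_mem, fun h => h.elim (I.1.lower inf_le_left)
      (I.1.lower inf_le_right)⟩

variable {L}

theorem stoneHom_le_stoneHom_iff (a b : L) : stoneHom L a ≤ stoneHom L b ↔ a ≤ b := by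
  refine ⟨fun hab => ?_, fun hab I ha hb => ha (I.1.lower hab hb)⟩
  by_contra hnot
  have hdisj : Disjoint (PFilter.principal a : Set L) (Ideal.principal b : Set L) :=
    Set.disjoint_left.2 fun x hax hxb => hnot ((PFilter.mem_principal.1 hax).trans
      (Ideal.mem_principal.1 hxb))
  obtain ⟨J, hJ, hbJ, haJ⟩ := prime_ideal_of_disjoint_filter_ideal hdisj
  have ha_notMem : a ∉ J := Set.disjoint_left.1 haJ (PFilter.mem_principal.2 le_rfl)
  exact @hab ⟨J, hJ⟩ ha_notMem (hbJ Ideal.mem_principal_self)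

end DistribLattice

theorem representable_iff_embeds_in_distrib_lattice_general {P : Type u} [PartialOrder P]
    (α β : Cardinal.{u}) (hα' : α ≤ ℵ₀) (hβ' : β ≤ ℵ₀) :
    (∃ (X : Type u) (h : P → Set X), IsRep α β h) ↔
    (∃ (L : Type u) (_ : DistribLattice L) (e : P → L), IsABEmbedding α β e) := by
  constructor
  · rintro ⟨X, h, hh⟩
    exact ⟨Set X, inferInstance, h, isRep_iff_isABEmbedding.1 hh⟩
  · rintro ⟨L, _, e, he⟩
    exact ⟨_, DistribLattice.stoneHom L ∘ e, isRep_iff_isABEmbedding.2 <|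
      he.latticeHom_comp hα' hβ' _ DistribLattice.stoneHom_le_stoneHom_iff⟩

/-- For `2 < α, β ≤ ω`, a poset `P` is `(α,β)`-representable iff there is a
distributive lattice `L` and an `(α,β)`-embedding `e : P → L`. -/
theorem representable_iff_embeds_in_distrib_lattice {P : Type u} [PartialOrder P]
    (α β : Cardinal.{u}) (hα : 2 < α) (hβ : 2 < β) (hα' : α ≤ ℵ₀) (hβ' : β ≤ ℵ₀) :
    (∃ (X : Type u) (h : P → Set X), IsRep α β h) ↔
    (∃ (L : Type u) (_ : DistribLattice L) (e : P → L), IsABEmbedding α β e) :=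
  representable_iff_embeds_in_distrib_lattice_general α β hα' hβ'
end

section
/- For each n with 4 ≤ n < ω, let P_n be the poset on X ∪ Y ∪ {p,q} where X = {x_1,...,x_n}, Y = {y_s : s ⊂ X, |s| = n−2}, with q < x for all x ∈ X, p > x for all x ∈ X, and y_s > x iff x ∈ s (transitively closed). Then for every subset t ⊆ X with 2 ≤ |t| ≤ n−2, the join ⋁t does not exist in P_n (its set of upper bounds {y_s : t ⊆ s} ∪ {p} is an antichain with at least two elements). -/
/-- The carrier of the poset `P_n`: elements `p`, `q`, `x i` for `i < n`, and `y s` for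
each subset `s` of `{0,...,n-1}` of size `n - 2`. -/
inductive PnElt (n : ℕ) : Type
  | p : PnElt n
  | q : PnElt n
  | x : Fin n → PnElt n
  | y : {s : Finset (Fin n) // s.card = n - 2} → PnElt n

namespace PnElt

variable {n : ℕ}

/-- The order on `P_n`, generated by `q < x i` for all `i`, `x i < p` for all `i`, and
`x i < y s` iff `i ∈ s`, closed under transitivity (so `q` is below everything). -/
def le : PnElt n → PnElt n → Prop
  | .q, _ => True
  | .x i, .x j => i = j
  | .x _, .p => True
  | .x i, .y s => i ∈ s.1
  | .x _, .q => False
  | .y s, .y t => s = t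
  | .y _, _ => False
  | .p, .p => True
  | .p, _ => False

instance : PartialOrder (PnElt n) where
  le := le
  le_refl a := by cases a <;> simp [le]
  le_trans a b c hab hbc := by
    cases a <;> cases b <;> cases c <;> simp_all [le]
  le_antisymm a b hab hba := by
    cases a <;> cases b <;> simp_all [le]

end PnElt

/-- For `4 ≤ n` and any `t ⊆ X = {x_1,...,x_n}` with `2 ≤ |t| ≤ n - 2`,
the join of `t` does not exist in `P_n`: its set of upper bounds (which is
`{y s : t ⊆ s} ∪ {p}`) is an antichain with at least two elements. -/
theorem Pn_no_join_of_midsize_subset (n : ℕ) (hn : 4 ≤ n) (t : Finset (Fin n))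
    (h2 : 2 ≤ t.card) (hc : t.card ≤ n - 2) :
    (¬ ∃ j : PnElt n, IsLUB (PnElt.x '' ↑t) j) ∧
    upperBounds (PnElt.x '' ↑t : Set (PnElt n)) =
      {PnElt.p} ∪ {b : PnElt n | ∃ s : {s : Finset (Fin n) // s.card = n - 2},
        b = PnElt.y s ∧ t ⊆ s.1} ∧
    IsAntichain (· ≤ ·) (upperBounds (PnElt.x '' ↑t : Set (PnElt n))) ∧
    (∃ u v, u ∈ upperBounds (PnElt.x '' ↑t : Set (PnElt n)) ∧
      v ∈ upperBounds (PnElt.x '' ↑t : Set (PnElt n)) ∧ u ≠ v) := by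

  obtain ⟨s, hts, hscard⟩ : ∃ s, t ⊆ s ∧ s.card = n - 2 :=
    Finset.exists_superset_card_eq hc (by simp)
  obtain ⟨i1, hi1, i2, hi2, hi12⟩ := Finset.one_lt_card.mp (by omega : 1 < t.card)
  have hmem : ∀ b : PnElt n, b ∈ upperBounds (PnElt.x '' ↑t : Set (PnElt n)) ↔
      ∀ i ∈ t, PnElt.le (.x i) b := by
    intro b
    constructor
    · intro hb i hi
      exact hb ⟨i, by simpa using hi, rfl⟩
    · rintro h _ ⟨i, hi, rfl⟩
      exact h i (by simpa using hi)
  have hub : upperBounds (PnElt.x '' ↑t : Set (PnElt n)) =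
      {PnElt.p} ∪ {b : PnElt n | ∃ s : {s : Finset (Fin n) // s.card = n - 2},
        b = PnElt.y s ∧ t ⊆ s.1} := by
    ext b
    rw [hmem]
    cases b with
    | p => simp [PnElt.le]
    | q =>
      simp only [PnElt.le, Set.mem_union, Set.mem_singleton_iff, Set.mem_setOf_eq]
      constructor
      · intro h; exact absurd (h i1 hi1) (by simp)
      · rintro (h | ⟨s', h, _⟩) <;> simp_all
    | x j =>
      simp only [PnElt.le, Set.mem_union, Set.mem_singleton_iff, Set.mem_setOf_eq]
      constructor
      · intro h
        exact absurd ((h i1 hi1).trans (h i2 hi2).symm) hi12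
      · rintro (h | ⟨s', h, _⟩) <;> simp_all
    | y s' =>
      simp only [PnElt.le, Set.mem_union, Set.mem_singleton_iff, Set.mem_setOf_eq]
      constructor
      · intro h
        exact Or.inr ⟨s', rfl, fun i hi => h i hi⟩
      · rintro (h | ⟨s'', h, hts''⟩)
        · simp_all
        · cases h
          exact fun i hi => hts'' hi
  have hp : PnElt.p ∈ upperBounds (PnElt.x '' ↑t : Set (PnElt n)) := by
    rw [hub]; left; rfl
  have hy : PnElt.y ⟨s, hscard⟩ ∈ upperBounds (PnElt.x '' ↑t : Set (PnElt n)) := by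
    rw [hub]; right; exact ⟨⟨s, hscard⟩, rfl, hts⟩
  have hanti : IsAntichain (· ≤ ·) (upperBounds (PnElt.x '' ↑t : Set (PnElt n))) := by
    rw [hub]
    rintro a (ha | ⟨sa, rfl, hta⟩) b (hb | ⟨sb, rfl, htb⟩) hab hle
    · exact hab (ha.trans hb.symm)
    · cases ha; exact hle
    · cases hb; exact hle
    · exact hab (by rw [show sa = sb from hle])
  refine ⟨?_, hub, hanti, PnElt.p, PnElt.y ⟨s, hscard⟩, hp, hy, by simp⟩
  rintro ⟨j, hj1, hj2⟩
  have h1 : j ≤ PnElt.p := hj2 hp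
  have h2 : j ≤ PnElt.y ⟨s, hscard⟩ := hj2 hy
  have hju : j ∈ upperBounds (PnElt.x '' ↑t : Set (PnElt n)) := hj1
  rw [hub] at hju
  rcases hju with hju | ⟨sj, rfl, _⟩
  · cases hju; exact h2
  · exact h1
end

section
/- If P is a completely representable poset, then there exists a complete lattice L and a complete order embedding e : P → L such that the completely join-irreducible elements of L are join-dense in L and L satisfies the frame distributivity law p ∧ ⋁X = ⋁{p ∧ x : x ∈ X} for all p and X. Conversely, the existence of such L and e implies P is completely representable. -/
/-- `h : P → ℘(X)` is a complete representation: an order embedding sending all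
existing meets of nonempty sets to intersections and all existing joins of nonempty
sets to unions. -/
def IsCompleteRep {P : Type u} [PartialOrder P] {X : Type u} (h : P → Set X) : Prop :=
  (∀ p q : P, p ≤ q ↔ h p ⊆ h q) ∧
  (∀ S : Set P, S.Nonempty → ∀ m, IsGLB S m → h m = ⋂ x ∈ S, h x) ∧
  (∀ S : Set P, S.Nonempty → ∀ j, IsLUB S j → h j = ⋃ x ∈ S, h x)

/-- An element of a complete lattice is completely join-irreducible if whenever it is
the join of a set, it belongs to that set. -/
def CompletelyJoinIrred {L : Type u} [CompleteLattice L] (a : L) : Prop :=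
  ∀ S : Set L, a = sSup S → a ∈ S

/-- A poset `P` is completely representable iff there is a complete
lattice `L` and a complete embedding `e : P → L` such that the completely
join-irreducible elements of `L` are join-dense and `L` satisfies the frame
distributivity law `p ⊓ ⨆ X = ⨆ {p ⊓ x : x ∈ X}`. -/
theorem completely_representable_iff {P : Type u} [PartialOrder P] :
    (∃ (X : Type u) (h : P → Set X), IsCompleteRep h) ↔
    (∃ (L : Type u) (_ : CompleteLattice L) (e : P → L),
      (∀ b : L, b = sSup {a : L | CompletelyJoinIrred a ∧ a ≤ b}) ∧
      (∀ (p : L) (S : Set L), p ⊓ sSup S = sSup ((fun x => p ⊓ x) '' S)) ∧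
      (∀ p q : P, p ≤ q ↔ e p ≤ e q) ∧
      (∀ S : Set P, S.Nonempty → ∀ m, IsGLB S m → e m = sInf (e '' S)) ∧
      (∀ S : Set P, S.Nonempty → ∀ j, IsLUB S j → e j = sSup (e '' S))) := by
  constructor
  · rintro ⟨X, h, hord, hmeet, hjoin⟩
    have sing : ∀ x : X, CompletelyJoinIrred ({x} : Set X) := by
      intro x S hS
      have hx : x ∈ sSup S := by rw [← hS]; exact rfl
      rw [Set.sSup_eq_sUnion] at hx
      obtain ⟨t, htS, hxt⟩ := hx
      have ht : t = {x} := by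
        apply Set.eq_singleton_iff_unique_mem.mpr
        refine ⟨hxt, fun y hy => ?_⟩
        have : y ∈ sSup S := by
          rw [Set.sSup_eq_sUnion]; exact Set.mem_sUnion.mpr ⟨t, htS, hy⟩
        rw [← hS] at this; exact this
      exact ht ▸ htS
    refine ⟨Set X, inferInstance, h, ?_, ?_, hord, ?_, ?_⟩
    · intro b
      apply le_antisymm
      · intro x hx
        rw [Set.sSup_eq_sUnion]
        exact Set.mem_sUnion.mpr ⟨{x}, ⟨sing x, by simpa using hx⟩, rfl⟩
      · exact sSup_le fun a ha => ha.2
    · intro p S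
      ext x
      simp only [Set.sSup_eq_sUnion, Set.mem_sUnion, Set.mem_image, Set.inf_eq_inter,
        Set.mem_inter_iff]
      constructor
      · rintro ⟨hp, t, ht, hx⟩; exact ⟨p ∩ t, ⟨t, ht, rfl⟩, hp, hx⟩
      · rintro ⟨u, ⟨t, ht, rfl⟩, hp, hx⟩; exact ⟨hp, t, ht, hx⟩
    · intro S hS m hm
      rw [hmeet S hS m hm, Set.sInf_eq_sInter, Set.sInter_image]
    · intro S hS j hj
      rw [hjoin S hS j hj, Set.sSup_eq_sUnion, Set.sUnion_image]
  · rintro ⟨L, instL, e, dense, frame, ord, hmeet, hjoin⟩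
    have prime : ∀ a : L, CompletelyJoinIrred a → ∀ T : Set L, a ≤ sSup T →
        ∃ t ∈ T, a ≤ t := by
      intro a ha T hle
      have h1 : a = sSup ((fun x => a ⊓ x) '' T) := by
        rw [← frame a T]; exact (inf_eq_left.mpr hle).symm
      obtain ⟨t, ht, heq⟩ := ha _ h1
      exact ⟨t, ht, inf_eq_left.mp heq⟩
    refine ⟨L, fun p => {a : L | CompletelyJoinIrred a ∧ a ≤ e p}, ?_, ?_, ?_⟩
    · intro p q
      constructor
      · intro hpq a ha
        exact ⟨ha.1, ha.2.trans ((ord p q).mp hpq)⟩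
      · intro hsub
        apply (ord p q).mpr
        calc e p = sSup {a : L | CompletelyJoinIrred a ∧ a ≤ e p} := dense (e p)
          _ ≤ e q := sSup_le fun a ha => (hsub ha).2
    · intro S hS m hm
      ext a
      simp only [Set.mem_iInter, Set.mem_setOf_eq]
      constructor
      · intro ⟨h1, h2⟩ x hx
        exact ⟨h1, h2.trans ((ord m x).mp (hm.1 hx))⟩
      · intro hall
        obtain ⟨x0, hx0⟩ := hS
        refine ⟨(hall x0 hx0).1, ?_⟩
        rw [hmeet S ⟨x0, hx0⟩ m hm]
        exact le_sInf fun b ⟨x, hx, hbx⟩ => hbx ▸ (hall x hx).2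
    · intro S hS j hj
      ext a
      simp only [Set.mem_iUnion, Set.mem_setOf_eq]
      constructor
      · intro ⟨h1, h2⟩
        rw [hjoin S hS j hj] at h2
        obtain ⟨b, ⟨x, hx, rfl⟩, hab⟩ := prime a h1 _ h2
        exact ⟨x, hx, h1, hab⟩
      · rintro ⟨x, hx, h1, h2⟩
        exact ⟨h1, h2.trans ((ord x j).mp (hj.1 hx))⟩
end
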